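/- For any finite ranked poset P, rowmotion Row and the gyration toggle-group element Gyr are conjugate elements of the toggle group T(P); equivalently, there exists a bijection φ: J(P) → J(P) (an element of T(P)) such that φ ∘ Row = Gyr ∘ φ, so J(P) under Row and J(P) under Gyr are in equivariant bijection. -/

import Mathlib

open Classical in
/-- The toggle `t_q` on the set `J(P)` of order ideals (= lower sets) of a poset:
`t_q(X) = X ∪ {q}` if `q ∉ X` and `X ∪ {q} ∈ J(P)`; `t_q(X) = X \ {q}` if `q ∈ X`
and `X \ {q} ∈ J(P)`; and `t_q(X) = X` otherwise. -/
noncomputable def togGen {α : Type*} [PartialOrder α] (q : α)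
    (X : {S : Set α // IsLowerSet S}) : {S : Set α // IsLowerSet S} :=
  if h : q ∉ X.1 ∧ IsLowerSet (X.1 ∪ {q}) then ⟨X.1 ∪ {q}, h.2⟩
  else if h' : q ∈ X.1 ∧ IsLowerSet (X.1 \ {q}) then ⟨X.1 \ {q}, h'.2⟩
  else X

/-- Apply the toggles of the elements listed in `L`, left to right.  The elements of
the toggle group `T(P)` are exactly the maps of this form for words `L` (toggles are
involutions, so the group they generate coincides with the monoid they generate). -/
noncomputable def applyToggles {α : Type*} [PartialOrder α] (L : List α)
    (X : {S : Set α // IsLowerSet S}) : {S : Set α // IsLowerSet S} :=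
  L.foldl (fun Y q => togGen q Y) X

/-- Rowmotion on order ideals: `Row(X)` is the order ideal generated by the minimal
elements of the complement of `X`. -/
def rowmotion {α : Type*} [PartialOrder α] (X : {S : Set α // IsLowerSet S}) :
    {S : Set α // IsLowerSet S} :=
  ⟨{z | ∃ y, (y ∉ X.1 ∧ ∀ w, w ∉ X.1 → w ≤ y → w = y) ∧ z ≤ y}, by
    intro a b hba ha
    obtain ⟨y, hy, hay⟩ := ha
    exact ⟨y, hy, hba.trans hay⟩⟩

/-!
Let `τᵢ` be the product of the toggles at the elements of rank `i`. Two toggles commute unless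
their elements form a cover, so `τᵢ` and `τⱼ` commute when `j ≥ i + 2`. Toggling from the top
rank down computes rowmotion (Cameron–Fon-Der-Flaass): when rank `i` is toggled, the ranks above
already agree with `Row X` and those below still agree with `X`, and the toggle rule at `x` then
becomes the local characterisation `mem_rowmotion_iff` of `Row X`. Hence `Row = τ₀ τ₁ ⋯ τᵣ` and
`Gyr = (∏ odd τᵢ) (∏ even τᵢ)`, two Coxeter elements of a path. They are conjugate by induction
on `r`: appending `τᵣ₊₁` on the right of both keeps a conjugator that commutes with `τᵣ₊₁`, and
moving `τᵣ₊₁` to the left of the bipartite product is one more conjugation, by that product.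
-/
local notation "𝒥 " α => {S : Set α // IsLowerSet S}

section Toggle

variable {α : Type*} [PartialOrder α]

theorem IsLowerSet.union_singleton_iff {X : Set α} (hX : IsLowerSet X) {q : α} :
    IsLowerSet (X ∪ {q}) ↔ ∀ w < q, w ∈ X := by
  refine ⟨fun h w hw => ?_, fun h a b hba hb => ?_⟩
  · exact (h hw.le (Or.inr rfl)).resolve_right hw.ne
  · rcases hb with hb | rfl
    · exact Or.inl (hX hba hb)
    · exact hba.lt_or_eq.imp (h b) id

theorem IsLowerSet.diff_singleton_iff {X : Set α} (hX : IsLowerSet X) {q : α} :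
    IsLowerSet (X \ {q}) ↔ ∀ w, q < w → w ∉ X := by
  refine ⟨fun h w hw hwX => (h hw.le ⟨hwX, hw.ne'⟩).2 rfl, fun h a b hba hb => ?_⟩
  refine ⟨hX hba hb.1, fun hb' => ?_⟩
  rcases hba.lt_or_eq with hlt | rfl
  · exact h a (hb' ▸ hlt) hb.1
  · exact hb.2 hb'

variable {p q x c : α} {X : 𝒥 α}

theorem mem_togGen_of_ne (hx : x ≠ q) : x ∈ (togGen q X).1 ↔ x ∈ X.1 := by
  unfold togGen
  split_ifs <;> simp [hx]

theorem mem_togGen_self :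
    q ∈ (togGen q X).1 ↔ (∀ w < q, w ∈ X.1) ∧ (q ∈ X.1 → ∃ w, q < w ∧ w ∈ X.1) := by
  unfold togGen
  by_cases hq : q ∈ X.1
  · have hbelow : ∀ w < q, w ∈ X.1 := fun w hw => X.2 hw.le hq
    rw [dif_neg (fun h => h.1 hq)]
    by_cases hdel : IsLowerSet (X.1 \ {q})
    · rw [dif_pos ⟨hq, hdel⟩]
      have hdel := X.2.diff_singleton_iff.1 hdel
      refine iff_of_false (fun h => h.2 rfl) fun ⟨_, hex⟩ => ?_
      obtain ⟨w, hw, hwX⟩ := hex hq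
      exact hdel w hw hwX
    · rw [dif_neg (fun h => hdel h.2)]
      rw [X.2.diff_singleton_iff] at hdel
      push Not at hdel
      exact iff_of_true hq ⟨hbelow, fun _ => hdel⟩
  · by_cases hadd : IsLowerSet (X.1 ∪ {q})
    · rw [dif_pos ⟨hq, hadd⟩]
      exact iff_of_true (Or.inr rfl) ⟨X.2.union_singleton_iff.1 hadd, fun h => absurd h hq⟩
    · rw [dif_neg (fun h => hadd h.2), dif_neg (fun h => hq h.1)]
      exact iff_of_false hq fun h => hadd (X.2.union_singleton_iff.2 h.1)

theorem togGen_eq_self_of_lt_of_mem (hqc : q < c) (hc : c ∈ X.1) : togGen q X = X := by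
  have hq : q ∈ X.1 := X.2 hqc.le hc
  rw [togGen, dif_neg (fun h => h.1 hq), dif_neg (fun h => (h.2 hqc.le ⟨hc, hqc.ne'⟩).2 rfl)]

theorem togGen_eq_self_of_lt_of_notMem (hcq : c < q) (hc : c ∉ X.1) : togGen q X = X := by
  have hq : q ∉ X.1 := fun hq => hc (X.2 hcq.le hq)
  rw [togGen, dif_neg (fun h => (h.2 hcq.le (Or.inr rfl)).elim hc hcq.ne),
    dif_neg (fun h => hq h.1)]

theorem togGen_involutive (q : α) : Function.Involutive (togGen q) := by
  intro X
  refine Subtype.ext (Set.ext fun x => ?_)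
  rcases eq_or_ne x q with rfl | hx
  · have hbelow : x ∈ X.1 → ∀ w < x, w ∈ X.1 := fun hx w hw => X.2 hw.le hx
    have habove : (∃ w, x < w ∧ w ∈ X.1) → x ∈ X.1 := fun ⟨w, hw, hwX⟩ => X.2 hw.le hwX
    have hoff : ∀ w, w ≠ x → (w ∈ (togGen x X).1 ↔ w ∈ X.1) := fun w hw => mem_togGen_of_ne hw
    have hbelow' : (∀ w < x, w ∈ (togGen x X).1) ↔ ∀ w < x, w ∈ X.1 :=
      forall₂_congr fun w hw => hoff w hw.ne
    have habove' : (∃ w, x < w ∧ w ∈ (togGen x X).1) ↔ ∃ w, x < w ∧ w ∈ X.1 :=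
      exists_congr fun w => and_congr_right fun hw => hoff w hw.ne'
    rw [mem_togGen_self, hbelow', habove', mem_togGen_self]
    by_cases hx : x ∈ X.1
    · exact iff_of_true ⟨hbelow hx, fun h => h.2 hx⟩ hx
    · exact iff_of_false (fun ⟨hA, h⟩ => hx (habove (h ⟨hA, fun h' => absurd h' hx⟩))) hx
  · rw [mem_togGen_of_ne hx, mem_togGen_of_ne hx]

theorem mem_togGen_togGen_of_not_covBy (hne : p ≠ q) (hpq : ¬p ⋖ q) (hqp : ¬q ⋖ p) :
    q ∈ (togGen q (togGen p X)).1 ↔ q ∈ (togGen q X).1 := by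
  have hoff : ∀ w, w ≠ p → (w ∈ (togGen p X).1 ↔ w ∈ X.1) := fun w hw => mem_togGen_of_ne hw
  rw [mem_togGen_self, mem_togGen_self, hoff q hne.symm]
  by_cases hlt : p < q
  · obtain ⟨c, hpc, hcq⟩ := (not_covBy_iff hlt).1 hpq
    by_cases hc : c ∈ X.1
    · rw [togGen_eq_self_of_lt_of_mem hpc hc]
    · have hc' : c ∉ (togGen p X).1 := by rwa [hoff c hpc.ne']
      exact iff_of_false (fun h => hc' (h.1 c hcq)) (fun h => hc (h.1 c hcq))
  have hbelow : (∀ w < q, w ∈ (togGen p X).1) ↔ ∀ w < q, w ∈ X.1 :=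
    forall₂_congr fun w hw => hoff w fun hwp => hlt (hwp ▸ hw)
  rw [hbelow]
  by_cases hgt : q < p
  · obtain ⟨c, hqc, hcp⟩ := (not_covBy_iff hgt).1 hqp
    by_cases hc : c ∈ X.1
    · have hc' : c ∈ (togGen p X).1 := (hoff c hcp.ne).2 hc
      exact and_congr_right' (iff_of_true (fun _ => ⟨c, hqc, hc'⟩) (fun _ => ⟨c, hqc, hc⟩))
    · rw [togGen_eq_self_of_lt_of_notMem hcp hc]
  · have habove : (∃ w, q < w ∧ w ∈ (togGen p X).1) ↔ ∃ w, q < w ∧ w ∈ X.1 :=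
      exists_congr fun w => and_congr_right fun hw => hoff w fun hwp => hgt (hwp ▸ hw)
    rw [habove]

theorem togGen_comm (hpq : ¬p ⋖ q) (hqp : ¬q ⋖ p) :
    togGen p (togGen q X) = togGen q (togGen p X) := by
  rcases eq_or_ne p q with rfl | hne
  · rfl
  refine Subtype.ext (Set.ext fun x => ?_)
  by_cases hxp : x = p
  · subst hxp
    rw [mem_togGen_togGen_of_not_covBy hne.symm hqp hpq, mem_togGen_of_ne hne]
  by_cases hxq : x = q
  · subst hxq
    rw [mem_togGen_togGen_of_not_covBy hne hpq hqp, mem_togGen_of_ne hne.symm]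
  · rw [mem_togGen_of_ne hxp, mem_togGen_of_ne hxq, mem_togGen_of_ne hxq, mem_togGen_of_ne hxp]

end Toggle

section ToggleWords

variable {α : Type*} [PartialOrder α] {x : α} {L : List α} {X : 𝒥 α}

theorem applyToggles_cons (q : α) (L : List α) (X : 𝒥 α) :
    applyToggles (q :: L) X = applyToggles L (togGen q X) := rfl

theorem mem_applyToggles_of_notMem (hx : x ∉ L) : x ∈ (applyToggles L X).1 ↔ x ∈ X.1 := by
  induction L generalizing X with
  | nil => rfl
  | cons q L ih =>
    rw [List.mem_cons, not_or] at hx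
    rw [applyToggles_cons, ih hx.2, mem_togGen_of_ne hx.1]

theorem mem_applyToggles_of_mem (hnd : L.Nodup) (hL : ∀ a ∈ L, ∀ b ∈ L, ¬a ⋖ b) (hx : x ∈ L) :
    x ∈ (applyToggles L X).1 ↔ x ∈ (togGen x X).1 := by
  induction L generalizing X with
  | nil => simp at hx
  | cons q L ih =>
    rw [List.nodup_cons] at hnd
    rw [applyToggles_cons]
    rcases List.mem_cons.1 hx with rfl | hxL
    · exact mem_applyToggles_of_notMem hnd.1
    · have hxq : x ≠ q := fun h => hnd.1 (h ▸ hxL)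
      rw [ih hnd.2 (fun a ha b hb => hL a (.tail _ ha) b (.tail _ hb)) hxL]
      exact mem_togGen_togGen_of_not_covBy hxq.symm (hL q (.head _) x hx) (hL x hx q (.head _))

theorem applyToggles_eq_of_perm {L₁ L₂ : List α} (h : L₁.Perm L₂)
    (hL : ∀ a ∈ L₁, ∀ b ∈ L₁, ¬a ⋖ b) : applyToggles L₁ = applyToggles L₂ :=
  funext (h.foldl_eq' fun a ha b hb _ => togGen_comm (hL b hb a ha) (hL a ha b hb))

noncomputable def togglePerm (q : α) : Equiv.Perm (𝒥 α) := (togGen_involutive q).toPerm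

noncomputable def toggleWord (L : List α) : Equiv.Perm (𝒥 α) := (L.reverse.map togglePerm).prod

theorem toggleWord_append (L₁ L₂ : List α) :
    toggleWord (L₁ ++ L₂) = toggleWord L₂ * toggleWord L₁ := by
  simp [toggleWord]

theorem coe_toggleWord (L : List α) : ⇑(toggleWord L) = applyToggles L := by
  induction L with
  | nil => rfl
  | cons q L ih =>
    funext X
    rw [← List.singleton_append, toggleWord_append, Equiv.Perm.mul_apply, ih]
    rfl

variable (α) in
def toggleGroup : Subgroup (Equiv.Perm (𝒥 α)) := Subgroup.closure (Set.range togglePerm)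

theorem toggleWord_mem_toggleGroup (L : List α) : toggleWord L ∈ toggleGroup α :=
  Subgroup.list_prod_mem _ fun _ hg => by
    obtain ⟨q, -, rfl⟩ := List.mem_map.1 hg
    exact Subgroup.subset_closure ⟨q, rfl⟩

theorem exists_toggleWord_eq {g : Equiv.Perm (𝒥 α)} (hg : g ∈ toggleGroup α) :
    ∃ L : List α, toggleWord L = g := by
  induction hg using Subgroup.closure_induction_left with
  | one => exact ⟨[], rfl⟩
  | mul_left _ hx _ _ ih =>
    obtain ⟨q, rfl⟩ := hx
    obtain ⟨L, rfl⟩ := ih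
    exact ⟨L ++ [q], by rw [toggleWord_append]; rfl⟩
  | inv_mul_cancel _ hx _ _ ih =>
    obtain ⟨q, rfl⟩ := hx
    obtain ⟨L, rfl⟩ := ih
    refine ⟨L ++ [q], ?_⟩
    rw [toggleWord_append, Equiv.Perm.inv_def, togglePerm, Function.Involutive.toPerm_symm]
    rfl

end ToggleWords

section PathConjugacy

variable {G : Type*} [Group G] (t : ℕ → G)

/- In a permutation group the right factor acts first: for the rank toggles, `ascendingProd`
toggles the ranks from the top down and `bipartiteProd` toggles the even ranks first. -/
def ascendingProd (r : ℕ) : G := ((List.range (r + 1)).map t).prod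

def bipartiteProd (r : ℕ) : G :=
  (((List.range (r + 1)).filter fun i => Odd i).map t).prod *
    (((List.range (r + 1)).filter fun i => Even i).map t).prod

variable {t}

theorem ascendingProd_succ (r : ℕ) :
    ascendingProd t (r + 1) = ascendingProd t r * t (r + 1) := by
  rw [ascendingProd, List.range_succ, List.map_append, List.prod_append, List.map_singleton,
    List.prod_singleton]
  rfl

theorem commute_prod_map_of_forall (ht : ∀ i j, i + 2 ≤ j → Commute (t i) (t j)) {l : List ℕ}
    {j : ℕ} (hl : ∀ i ∈ l, i + 2 ≤ j) : Commute (l.map t).prod (t j) :=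
  Commute.list_prod_left _ _ fun _ hx => by
    obtain ⟨i, hi, rfl⟩ := List.mem_map.1 hx
    exact ht i j (hl i hi)

theorem commute_bipartiteProd (ht : ∀ i j, i + 2 ≤ j → Commute (t i) (t j)) {r j : ℕ}
    (hj : r + 2 ≤ j) : Commute (bipartiteProd t r) (t j) := by
  have hl : ∀ (p : ℕ → Bool), ∀ i ∈ (List.range (r + 1)).filter p, i + 2 ≤ j := fun p i hi => by
    have := List.mem_range.1 (List.mem_filter.1 hi).1
    omega
  exact (commute_prod_map_of_forall ht (hl _)).mul_left (commute_prod_map_of_forall ht (hl _))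

theorem bipartiteProd_mem_closure (r : ℕ) :
    bipartiteProd t r ∈ Subgroup.closure (Set.range t) := by
  have hl : ∀ l : List ℕ, (l.map t).prod ∈ Subgroup.closure (Set.range t) := fun l =>
    Subgroup.list_prod_mem _ fun _ hx => by
      obtain ⟨i, -, rfl⟩ := List.mem_map.1 hx
      exact Subgroup.subset_closure ⟨i, rfl⟩
  exact mul_mem (hl _) (hl _)

theorem bipartiteProd_succ_of_even {r : ℕ} (hr : Even (r + 1)) :
    bipartiteProd t (r + 1) = bipartiteProd t r * t (r + 1) := by
  have hr' : ¬Odd (r + 1) := Nat.not_odd_iff_even.2 hr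
  simp [bipartiteProd, List.range_succ (n := r + 1), List.filter_append, hr, hr', mul_assoc]

theorem bipartiteProd_succ_of_odd (ht : ∀ i j, i + 2 ≤ j → Commute (t i) (t j)) {r : ℕ}
    (hr : Odd (r + 1)) : bipartiteProd t (r + 1) = t (r + 1) * bipartiteProd t r := by
  have hr' : ¬Even (r + 1) := Nat.not_even_iff_odd.2 hr
  have hodd : ((List.range (r + 2)).filter fun i => Odd i) =
      ((List.range (r + 1)).filter fun i => Odd i) ++ [r + 1] := by
    simp [List.range_succ (n := r + 1), List.filter_append, hr]
  have heven : ((List.range (r + 2)).filter fun i => Even i) =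
      (List.range (r + 1)).filter fun i => Even i := by
    simp [List.range_succ (n := r + 1), List.filter_append, hr']
  have hcomm : Commute (((List.range (r + 1)).filter fun i => Odd i).map t).prod (t (r + 1)) := by
    refine commute_prod_map_of_forall ht fun i hi => ?_
    simp only [List.mem_filter, List.mem_range, decide_eq_true_eq, Nat.odd_iff] at hi
    have := Nat.odd_iff.1 hr
    omega
  rw [bipartiteProd, bipartiteProd, hodd, heven, List.map_append, List.prod_append,
    List.map_singleton, List.prod_singleton, hcomm.eq, mul_assoc]

theorem exists_mul_ascendingProd_eq_bipartiteProd_mul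
    (ht : ∀ i j, i + 2 ≤ j → Commute (t i) (t j)) (r : ℕ) :
    ∃ g ∈ Subgroup.closure (Set.range t), (∀ j, r < j → Commute g (t j)) ∧
      g * ascendingProd t r = bipartiteProd t r * g := by
  induction r with
  | zero =>
    exact ⟨1, one_mem _, fun j _ => Commute.one_left _, by simp [ascendingProd, bipartiteProd]⟩
  | succ r ih =>
    obtain ⟨g, hg, hcomm, hconj⟩ := ih
    have hgt : Commute g (t (r + 1)) := hcomm _ (Nat.lt_succ_self r)
    rcases Nat.even_or_odd (r + 1) with hr | hr
    · refine ⟨g, hg, fun j hj => hcomm j (by omega), ?_⟩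
      rw [ascendingProd_succ, bipartiteProd_succ_of_even hr, ← mul_assoc, hconj, mul_assoc,
        hgt.eq, mul_assoc]
    · refine ⟨(bipartiteProd t r)⁻¹ * g, mul_mem (inv_mem (bipartiteProd_mem_closure r)) hg,
        fun j hj => (commute_bipartiteProd ht (by omega)).inv_left.mul_left (hcomm j (by omega)),
        ?_⟩
      rw [ascendingProd_succ, bipartiteProd_succ_of_odd ht hr]
      calc (bipartiteProd t r)⁻¹ * g * (ascendingProd t r * t (r + 1))
          = (bipartiteProd t r)⁻¹ * (g * ascendingProd t r) * t (r + 1) := by group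
        _ = g * t (r + 1) := by rw [hconj]; group
        _ = t (r + 1) * bipartiteProd t r * ((bipartiteProd t r)⁻¹ * g) := by rw [hgt.eq]; group

end PathConjugacy

section RankLevel

variable {α : Type*} [Fintype α] (rk : α → ℕ)

noncomputable def rankLevel (i : ℕ) : List α := (Finset.univ.filter fun a => rk a = i).toList

variable {rk}

theorem mem_rankLevel {i : ℕ} {a : α} : a ∈ rankLevel rk i ↔ rk a = i := by
  simp [rankLevel]

theorem nodup_rankLevel (i : ℕ) : (rankLevel rk i).Nodup := Finset.nodup_toList _

end RankLevel

section Rowmotion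

variable {α : Type*} [PartialOrder α]

theorem mem_rowmotion_iff {X : 𝒥 α} {x : α} :
    x ∈ (rowmotion X).1 ↔ (∀ w < x, w ∈ X.1) ∧ (x ∈ X.1 → ∃ w, x < w ∧ w ∈ (rowmotion X).1) := by
  refine ⟨fun ⟨y, ⟨hy, hmin⟩, hxy⟩ => ⟨fun w hw => ?_, fun hx => ?_⟩, fun ⟨hbelow, habove⟩ => ?_⟩
  · by_contra hwX
    exact (hw.trans_le hxy).ne (hmin w hwX (hw.le.trans hxy))
  · exact ⟨y, hxy.lt_of_ne fun h => hy (h ▸ hx), y, ⟨hy, hmin⟩, le_rfl⟩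
  · by_cases hx : x ∈ X.1
    · obtain ⟨w, hxw, hw⟩ := habove hx
      exact (rowmotion X).2 hxw.le hw
    · refine ⟨x, ⟨hx, fun w hwX hwx => by_contra fun hne => ?_⟩, le_rfl⟩
      exact hwX (hbelow w (hwx.lt_of_ne hne))

theorem strictMono_of_covBy_imp_eq_add_one [Finite α] {rk : α → ℕ}
    (hrk : ∀ a b : α, a ⋖ b → rk b = rk a + 1) : StrictMono rk := by
  intro a b hab
  induction a using WellFoundedGT.induction with
  | _ a ih =>
    obtain ⟨c, hac, hcb⟩ := exists_covBy_le_of_lt hab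
    rw [← Nat.add_one_le_iff, ← hrk a c hac]
    rcases hcb.lt_or_eq with hcb | rfl
    · exact (ih c hac.lt hcb).le
    · exact le_rfl

variable [Fintype α] (rk : α → ℕ)

noncomputable def rankToggle (i : ℕ) : Equiv.Perm (𝒥 α) := toggleWord (rankLevel rk i)

variable {rk}

theorem mem_rankToggle_apply (hrk : StrictMono rk) {i : ℕ} {X : 𝒥 α} {x : α} :
    x ∈ (rankToggle rk i X).1 ↔ if rk x = i then x ∈ (togGen x X).1 else x ∈ X.1 := by
  rw [rankToggle, coe_toggleWord]
  split_ifs with hx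
  · refine mem_applyToggles_of_mem (nodup_rankLevel i) (fun a ha b hb hab => ?_)
      (mem_rankLevel.2 hx)
    have := hrk hab.lt
    rw [mem_rankLevel.1 ha, mem_rankLevel.1 hb] at this
    exact lt_irrefl i this
  · exact mem_applyToggles_of_notMem (mt mem_rankLevel.1 hx)

theorem mem_prod_rankToggle_apply (hrk : StrictMono rk) (X : 𝒥 α) {k n : ℕ}
    (hn : ∀ a, rk a < k + n) (x : α) :
    x ∈ (((List.range' k n).map (rankToggle rk)).prod X).1 ↔
      if k ≤ rk x then x ∈ (rowmotion X).1 else x ∈ X.1 := by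
  induction n generalizing k x with
  | zero =>
    rw [if_neg (by have := hn x; omega)]
    rfl
  | succ n ih =>
    have ih := @ih (k + 1) (fun a => by have := hn a; omega)
    rw [List.range'_succ, List.map_cons, List.prod_cons, Equiv.Perm.mul_apply,
      mem_rankToggle_apply hrk]
    split_ifs with hxk hk
    · rw [mem_togGen_self, mem_rowmotion_iff, ih, if_neg (by omega)]
      refine and_congr (forall₂_congr fun w hw => ?_)
        (imp_congr_right fun _ => exists_congr fun w => and_congr_right fun hw => ?_)
      · rw [ih, if_neg (by have := hrk hw; omega)]
      · rw [ih, if_pos (by have := hrk hw; omega)]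
    · omega
    · rw [ih, if_pos (by omega)]
    · rw [ih, if_neg (by omega)]

theorem rowmotion_eq_ascendingProd (hrk : StrictMono rk) {r : ℕ} (hr : ∀ a, rk a ≤ r) :
    rowmotion = ⇑(ascendingProd (rankToggle rk) r) := by
  funext X
  refine Subtype.ext (Set.ext fun x => ?_)
  rw [ascendingProd, List.range_eq_range',
    mem_prod_rankToggle_apply hrk X (fun a => by have := hr a; omega), if_pos (Nat.zero_le _)]

end Rowmotion

section Gyration

variable {α : Type*} [PartialOrder α]

theorem prod_map_toggleWord (f : ℕ → List α) (R : List ℕ) :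
    (R.map fun i => toggleWord (f i)).prod = toggleWord (R.reverse.flatMap f) := by
  induction R with
  | nil => rfl
  | cons i R ih =>
    rw [List.map_cons, List.prod_cons, ih, ← toggleWord_append]
    simp

variable [Fintype α] {rk : α → ℕ}

theorem rankToggle_commute (hrk : ∀ a b : α, a ⋖ b → rk b = rk a + 1) {i j : ℕ}
    (hij : i + 2 ≤ j) : Commute (rankToggle rk i) (rankToggle rk j) := by
  have hperm : applyToggles (rankLevel rk j ++ rankLevel rk i) =
      applyToggles (rankLevel rk i ++ rankLevel rk j) :=
    applyToggles_eq_of_perm List.perm_append_comm fun a ha b hb hab => by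
      have := hrk a b hab
      simp only [List.mem_append, mem_rankLevel] at ha hb
      omega
  unfold Commute SemiconjBy rankToggle
  rw [← toggleWord_append, ← toggleWord_append]
  exact DFunLike.coe_injective (by rw [coe_toggleWord, coe_toggleWord, hperm])

theorem applyToggles_eq_prod_rankToggle {R : List ℕ} {l : List α} (hR : R.Nodup) (hl : l.Nodup)
    (hmem : ∀ a, a ∈ l ↔ rk a ∈ R) (hcov : ∀ a ∈ l, ∀ b ∈ l, ¬a ⋖ b) :
    applyToggles l = ⇑((R.map (rankToggle rk)).prod) := by
  have hnd : (R.reverse.flatMap (rankLevel rk)).Nodup :=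
    List.nodup_flatMap.2 ⟨fun i _ => nodup_rankLevel i, (List.nodup_reverse.2 hR).imp
      fun hne a ha hb => hne ((mem_rankLevel.1 ha).symm.trans (mem_rankLevel.1 hb))⟩
  have hperm : l.Perm (R.reverse.flatMap (rankLevel rk)) :=
    (List.perm_ext_iff_of_nodup hl hnd).2 fun a => by simp [hmem, mem_rankLevel]
  rw [applyToggles_eq_of_perm hperm hcov, ← coe_toggleWord, ← prod_map_toggleWord]
  rfl

theorem applyToggles_gyration (hrk : ∀ a b : α, a ⋖ b → rk b = rk a + 1) {r : ℕ}
    (hr : ∀ a, rk a ≤ r) {evens odds : List α} (hnd : (evens ++ odds).Nodup)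
    (hE : ∀ a, a ∈ evens ↔ Even (rk a)) (hO : ∀ a, a ∈ odds ↔ Odd (rk a)) :
    applyToggles (evens ++ odds) = ⇑(bipartiteProd (rankToggle rk) r) := by
  have hcov : ∀ a b, (Even (rk a) ↔ Even (rk b)) → ¬a ⋖ b := fun a b h hab => by
    rw [hrk a b hab, Nat.even_add_one] at h
    tauto
  have hevens := applyToggles_eq_prod_rankToggle (rk := rk)
    (R := (List.range (r + 1)).filter fun i => Even i)
    (List.nodup_range.filter _) hnd.of_append_left
    (fun a => by simp [hE, Nat.lt_succ_of_le (hr a)])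
    (fun a ha b hb => hcov a b (iff_of_true ((hE a).1 ha) ((hE b).1 hb)))
  have hodds := applyToggles_eq_prod_rankToggle (rk := rk)
    (R := (List.range (r + 1)).filter fun i => Odd i)
    (List.nodup_range.filter _) hnd.of_append_right
    (fun a => by simp [hO, Nat.lt_succ_of_le (hr a)])
    (fun a ha b hb => hcov a b (iff_of_false (Nat.not_even_iff_odd.2 ((hO a).1 ha))
      (Nat.not_even_iff_odd.2 ((hO b).1 hb))))
  funext X
  rw [bipartiteProd, Equiv.Perm.mul_apply, ← hevens, ← hodds]
  exact List.foldl_append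

end Gyration

theorem rowmotion_gyration_conjugate_general {α : Type*} [Fintype α] [PartialOrder α]
    (rk : α → ℕ)
    (hrk1 : ∀ a b : α, a ⋖ b → rk b = rk a + 1)
    (evens odds L : List α) (hL : L = evens ++ odds)
    (hnodup : L.Nodup) (hall : ∀ a : α, a ∈ L)
    (he : ∀ a ∈ evens, Even (rk a)) (ho : ∀ a ∈ odds, Odd (rk a)) :
    ∃ M : List α,
      Function.Bijective (applyToggles M) ∧
      ∀ X : {S : Set α // IsLowerSet S},
        applyToggles M (rowmotion X) = applyToggles L (applyToggles M X) := by
  subst hL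
  have hr : ∀ a, rk a ≤ Finset.univ.sup rk := fun a => Finset.le_sup (Finset.mem_univ a)
  have hpart : ∀ a, a ∈ evens ∨ a ∈ odds := fun a => List.mem_append.1 (hall a)
  have hE : ∀ a, a ∈ evens ↔ Even (rk a) := fun a =>
    ⟨he a, fun h => (hpart a).resolve_right fun h' => Nat.not_even_iff_odd.2 (ho a h') h⟩
  have hO : ∀ a, a ∈ odds ↔ Odd (rk a) := fun a =>
    ⟨ho a, fun h => (hpart a).resolve_left fun h' => Nat.not_even_iff_odd.2 h (he a h')⟩
  obtain ⟨g, hg, -, hconj⟩ :=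
    exists_mul_ascendingProd_eq_bipartiteProd_mul (fun _ _ => rankToggle_commute hrk1)
      (Finset.univ.sup rk)
  obtain ⟨M, rfl⟩ := exists_toggleWord_eq <|
    (Subgroup.closure_le _).2 (Set.range_subset_iff.2 fun i => toggleWord_mem_toggleGroup _) hg
  refine ⟨M, coe_toggleWord M ▸ (toggleWord M).bijective, fun X => ?_⟩
  rw [← coe_toggleWord, rowmotion_eq_ascendingProd (strictMono_of_covBy_imp_eq_add_one hrk1) hr,
    applyToggles_gyration hrk1 hr hnodup hE hO, ← Equiv.Perm.mul_apply, hconj,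
    Equiv.Perm.mul_apply]

/-- For any finite ranked poset `P` (with rank function `rk`
vanishing on minimal elements and increasing by exactly 1 along covering relations),
rowmotion and gyration are conjugate elements of the toggle group `T(P)`: for any
enumeration `L` of the elements of `P` listing all elements of even rank before all
elements of odd rank — so that `Gyr = applyToggles L` first toggles the even ranks
and then the odd ranks — there is an element `φ = applyToggles M` of the toggle
group, a bijection of `J(P)`, with `φ ∘ Row = Gyr ∘ φ`. -/
theorem rowmotion_gyration_conjugate {α : Type*} [Fintype α] [PartialOrder α]
    (rk : α → ℕ)
    (hrk0 : ∀ a : α, (∀ b : α, b ≤ a → b = a) → rk a = 0)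
    (hrk1 : ∀ a b : α, a ⋖ b → rk b = rk a + 1)
    (evens odds L : List α) (hL : L = evens ++ odds)
    (hnodup : L.Nodup) (hall : ∀ a : α, a ∈ L)
    (he : ∀ a ∈ evens, Even (rk a)) (ho : ∀ a ∈ odds, Odd (rk a)) :
    ∃ M : List α,
      Function.Bijective (applyToggles M) ∧
      ∀ X : {S : Set α // IsLowerSet S},
        applyToggles M (rowmotion X) = applyToggles L (applyToggles M X) :=
  rowmotion_gyration_conjugate_general rk hrk1 evens odds L hL hnodup hall he ho
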